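/- Set dr := X₁ + X₂ + X₃, and let (𝒳₁,…,𝒳₈) := (I_{12}^{+}P₁^{+}, I_{12}^{+}P₁^{−}, I_{12}^{−}P₁^{+}, I_{12}^{−}P₁^{−}, I_{12}^{+}P₃^{+}, I_{12}^{+}P₃^{−}, I_{12}^{−}P₃^{+}, I_{12}^{−}P₃^{−}). For λ₁,…,λ₈ ∈ ℝ, the element (K+1)(dr · Σ_{A=1}^{8} λ_A 𝒳_A) is a real scalar multiple of the identity of A if and only if λ₄ = λ₃, λ₅ = −(3λ₁ + λ₂)/4, λ₆ = −(λ₁ + 3λ₂)/4, λ₇ = (3/4)(λ₁ − λ₂) − λ₃, and λ₈ = −(3/4)(λ₁ − λ₂) − λ₃; moreover, when these relations hold the element (K+1)(dr · Σ_{A=1}^{8} λ_A 𝒳_A) is equal to 0 (the co-value vanishes together with the proper value). -/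

import Mathlib

/-!
The `X l` are commuting involutions, so `dr · Σ λ_A 𝒳_A` is a combination of the eight monomials
`1, X_l, X_i X_j, X₁X₂X₃`. Each monomial `U` satisfies `w^l U = ± U w^l`, and since `(w^l)² = -1`
this makes `J_l(U) w^l` equal to `0` or `U`; counting signs, `K+1` acts by `2` on the `X_l` and
`X_i X_j` and by `0` on `1` and `X₁X₂X₃`. So `(K+1)(dr · Σ λ_A 𝒳_A)` is a combination of six
non-scalar monomials, and it is a scalar only if the scalar and all six coefficients vanish. The
coefficients are read off by the functional `s ⊗ s`, where `s x = ½ Re tr ρ(x)` for the Pauli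
representation `ρ` of `Cl₃`; their vanishing is the stated linear system.
-/

open scoped TensorProduct

noncomputable section

/-- The standard positive-definite quadratic form on `ℝ³`. -/
abbrev Q3 : QuadraticForm ℝ (Fin 3 → ℝ) :=
  QuadraticMap.weightedSumSquares ℝ (fun _ : Fin 3 => (1 : ℝ))

/-- The Clifford algebra of 3-dimensional Euclidean space. -/
abbrev Cl3 : Type := CliffordAlgebra Q3

/-- The tensor product of two copies of `Cl3`, as ℝ-algebras. -/
abbrev A3 : Type := Cl3 ⊗[ℝ] Cl3

/-- The generators `e₁, e₂, e₃` (indexed by `Fin 3`). -/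
def e (l : Fin 3) : Cl3 := CliffordAlgebra.ι Q3 (Pi.single l 1)

/-- `X_l := e_l ⊗ e_l`. -/
def X (l : Fin 3) : A3 := e l ⊗ₜ[ℝ] e l

/-- `w^i := (e_j e_k) ⊗ 1` for `(i,j,k)` a cyclic permutation of the indices. -/
def w (i : Fin 3) : A3 := (e (i + 1) * e (i + 2)) ⊗ₜ[ℝ] (1 : Cl3)

/-- The (ℝ-linear) operators `J_l(U) := (1/2)(w^l U − U w^l)`. -/
def J (l : Fin 3) (U : A3) : A3 := (1/2 : ℝ) • (w l * U - U * w l)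

/-- Kähler's total angular momentum operator `K+1`. -/
def K1 (U : A3) : A3 := J 0 U * w 0 + J 1 U * w 1 + J 2 U * w 2

/-- The idempotents `I_{ij}^ε := (1/2)(1 + ε X_i X_j)`. -/
def Iem (i j : Fin 3) (ε : ℝ) : A3 := (1/2 : ℝ) • ((1 : A3) + ε • (X i * X j))

/-- The idempotents `P_l^δ := (1/2)(1 + δ X_l)`. -/
def P (l : Fin 3) (δ : ℝ) : A3 := (1/2 : ℝ) • ((1 : A3) + δ • X l)

/-- The eight idempotents `𝒳₁,…,𝒳₈` of Table 1. -/
def XA : Fin 8 → A3 :=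
  ![Iem 0 1 1 * P 0 1, Iem 0 1 1 * P 0 (-1),
    Iem 0 1 (-1) * P 0 1, Iem 0 1 (-1) * P 0 (-1),
    Iem 0 1 1 * P 2 1, Iem 0 1 1 * P 2 (-1),
    Iem 0 1 (-1) * P 2 1, Iem 0 1 (-1) * P 2 (-1)]

lemma mul_mul_eq_smul_of_mul_eq_smul {k R : Type*} [CommSemiring k] [Semiring R] [Algebra k R]
    {u x y : R} {a b : k} (hx : u * x = a • (x * u)) (hy : u * y = b • (y * u)) :
    u * (x * y) = (a * b) • (x * y * u) := by
  rw [← mul_assoc, hx, smul_mul_assoc, mul_assoc, hy, mul_smul_comm, smul_smul, mul_assoc]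

lemma Q3_single (l : Fin 3) : Q3 (Pi.single l 1) = 1 := by
  simp [QuadraticMap.weightedSumSquares_apply, Pi.single_apply]

lemma Q3_isOrtho_single {i j : Fin 3} (h : i ≠ j) :
    Q3.IsOrtho (Pi.single i 1) (Pi.single j 1) := by
  rw [QuadraticMap.isOrtho_def]
  fin_cases i <;> fin_cases j <;>
    simp_all [QuadraticMap.weightedSumSquares_apply, Fin.sum_univ_three]

lemma e_mul_self (l : Fin 3) : e l * e l = 1 := by
  rw [e, CliffordAlgebra.ι_sq_scalar, Q3_single, map_one]

lemma e_mul_self_mul (l : Fin 3) (x : Cl3) : e l * (e l * x) = x := by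
  rw [← mul_assoc, e_mul_self, one_mul]

lemma e_mul_e_of_ne {i j : Fin 3} (h : i ≠ j) : e i * e j = -(e j * e i) :=
  CliffordAlgebra.ι_mul_ι_comm_of_isOrtho (Q3_isOrtho_single h)

lemma e_mul_e_mul_of_ne {i j : Fin 3} (h : i ≠ j) (x : Cl3) :
    e i * (e j * x) = -(e j * (e i * x)) := by
  rw [← mul_assoc, e_mul_e_of_ne h, neg_mul, mul_assoc]

lemma e_mul_e_mul_self_of_ne {i j : Fin 3} (h : i ≠ j) : e i * e j * (e i * e j) = -1 := by
  rw [mul_assoc, e_mul_e_mul_of_ne h.symm, e_mul_self, mul_neg, mul_one, e_mul_self]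

lemma X_mul_self (l : Fin 3) : X l * X l = 1 := by
  rw [X, Algebra.TensorProduct.tmul_mul_tmul, e_mul_self, Algebra.TensorProduct.one_def]

lemma X_mul_self_mul (l : Fin 3) (U : A3) : X l * (X l * U) = U := by
  rw [← mul_assoc, X_mul_self, one_mul]

lemma X_commute (i j : Fin 3) : Commute (X i) (X j) := by
  by_cases h : i = j
  · rw [h]
  · show _ = _
    rw [X, X, Algebra.TensorProduct.tmul_mul_tmul, Algebra.TensorProduct.tmul_mul_tmul,
      e_mul_e_of_ne h, TensorProduct.neg_tmul, TensorProduct.tmul_neg, neg_neg]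

lemma dr_mul_sum_XA (lam : Fin 8 → ℝ) :
    (X 0 + X 1 + X 2) * ∑ A : Fin 8, lam A • XA A =
      ((lam 0 - lam 1) / 2 + (lam 4 - lam 5) / 4 + (lam 6 - lam 7) / 4) • (1 : A3)
    + ((lam 0 + lam 1 + lam 4 + lam 5) / 2) • X 0
    + ((lam 0 + lam 1 + lam 4 + lam 5) / 2) • X 1
    + ((lam 0 + lam 1 + lam 2 + lam 3 + lam 4 + lam 5 + lam 6 + lam 7) / 4) • X 2
    + ((lam 0 - lam 1) / 2 + (lam 4 - lam 5) / 4 - (lam 6 - lam 7) / 4) • (X 0 * X 1)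
    + ((lam 0 - lam 1) / 4 + (lam 2 - lam 3) / 4 + (lam 4 - lam 5) / 2) • (X 0 * X 2)
    + ((lam 0 - lam 1) / 4 - (lam 2 - lam 3) / 4 + (lam 4 - lam 5) / 2) • (X 1 * X 2)
    + ((lam 0 + lam 1 - lam 2 - lam 3 + lam 4 + lam 5 - lam 6 - lam 7) / 4) •
        (X 0 * (X 1 * X 2)) := by
  simp only [Fin.sum_univ_eight, XA, Iem, P, Matrix.cons_val, one_smul, neg_smul,
    smul_add, smul_neg, smul_smul, mul_add, add_mul, mul_neg, neg_mul, smul_mul_assoc,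
    mul_smul_comm, one_mul, mul_one, mul_assoc, X_mul_self, X_mul_self_mul, (X_commute 1 0).eq,
    (X_commute 2 0).eq, (X_commute 2 1).eq, (X_commute 1 0).left_comm, (X_commute 2 0).left_comm,
    (X_commute 2 1).left_comm]
  module

lemma w_mul_self (l : Fin 3) : w l * w l = -1 := by
  rw [w, Algebra.TensorProduct.tmul_mul_tmul, e_mul_e_mul_self_of_ne (by fin_cases l <;> decide),
    one_mul, TensorProduct.neg_tmul, Algebra.TensorProduct.one_def]

lemma w_mul_X (l m : Fin 3) : w l * X m = (if l = m then 1 else -1 : ℝ) • (X m * w l) := by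
  have h10 : (1 : Fin 3) ≠ 0 := by decide
  have h20 : (2 : Fin 3) ≠ 0 := by decide
  have h21 : (2 : Fin 3) ≠ 1 := by decide
  simp only [w, X, Algebra.TensorProduct.tmul_mul_tmul, one_mul, mul_one]
  fin_cases l <;> fin_cases m <;>
    simp [mul_assoc, e_mul_e_of_ne h10, e_mul_e_of_ne h20, e_mul_e_of_ne h21, e_mul_e_mul_of_ne h10,
      e_mul_e_mul_of_ne h20, e_mul_e_mul_of_ne h21, e_mul_self_mul, e_mul_self,
      TensorProduct.neg_tmul]

lemma K1_eq_smul_of_w_mul (U : A3) (ε : Fin 3 → ℝ) (h : ∀ l, w l * U = ε l • (U * w l)) :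
    K1 U = ((3 - (ε 0 + ε 1 + ε 2)) / 2) • U := by
  have hJ (l : Fin 3) : J l U * w l = ((1 - ε l) / 2) • U := by
    rw [J, h l, smul_mul_assoc, sub_mul, smul_mul_assoc, mul_assoc, w_mul_self, mul_neg_one]
    module
  rw [K1, hJ, hJ, hJ]
  module

lemma K1_one : K1 1 = 0 := by
  simp [K1, J]

lemma K1_X (l : Fin 3) : K1 (X l) = (2 : ℝ) • X l := by
  rw [K1_eq_smul_of_w_mul _ _ (fun m => w_mul_X m l)]
  fin_cases l <;> norm_num [Fin.ext_iff]

lemma K1_X_mul_X {i j : Fin 3} (h : i ≠ j) : K1 (X i * X j) = (2 : ℝ) • (X i * X j) := by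
  rw [K1_eq_smul_of_w_mul _ _
    (fun l => mul_mul_eq_smul_of_mul_eq_smul (w_mul_X l i) (w_mul_X l j))]
  fin_cases i <;> fin_cases j <;> first | exact absurd rfl h | norm_num [Fin.ext_iff]

lemma K1_X_mul_X_mul_X : K1 (X 0 * (X 1 * X 2)) = 0 := by
  rw [K1_eq_smul_of_w_mul _ _ (fun l => mul_mul_eq_smul_of_mul_eq_smul (w_mul_X l 0)
    (mul_mul_eq_smul_of_mul_eq_smul (w_mul_X l 1) (w_mul_X l 2)))]
  norm_num [Fin.ext_iff]

@[simps]
def K1Linear : A3 →ₗ[ℝ] A3 where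
  toFun := K1
  map_add' U V := by
    simp only [K1, J, mul_add, add_mul, sub_mul, smul_add, smul_sub, smul_mul_assoc]
    abel
  map_smul' r U := by
    simp only [K1, J, mul_smul_comm, smul_mul_assoc, sub_mul, smul_sub, smul_add, RingHom.id_apply]
    module

lemma K1_dr_mul_sum_XA (lam : Fin 8 → ℝ) :
    K1 ((X 0 + X 1 + X 2) * ∑ A : Fin 8, lam A • XA A) =
      (lam 0 + lam 1 + lam 4 + lam 5) • X 0
    + (lam 0 + lam 1 + lam 4 + lam 5) • X 1
    + ((lam 0 + lam 1 + lam 2 + lam 3 + lam 4 + lam 5 + lam 6 + lam 7) / 2) • X 2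
    + (lam 0 - lam 1 + (lam 4 - lam 5) / 2 - (lam 6 - lam 7) / 2) • (X 0 * X 1)
    + ((lam 0 - lam 1) / 2 + (lam 2 - lam 3) / 2 + (lam 4 - lam 5)) • (X 0 * X 2)
    + ((lam 0 - lam 1) / 2 - (lam 2 - lam 3) / 2 + (lam 4 - lam 5)) • (X 1 * X 2) := by
  rw [← K1Linear_apply, dr_mul_sum_XA]
  simp only [map_add, map_smul, K1Linear_apply, K1_one, K1_X,
    K1_X_mul_X (by decide : (0 : Fin 3) ≠ 1), K1_X_mul_X (by decide : (0 : Fin 3) ≠ 2),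
    K1_X_mul_X (by decide : (1 : Fin 3) ≠ 2), K1_X_mul_X_mul_X]
  module

def pauli : Fin 3 → Matrix (Fin 2) (Fin 2) ℂ :=
  ![!![0, 1; 1, 0], !![0, -Complex.I; Complex.I, 0], !![1, 0; 0, -1]]

lemma pauli_linearCombination_mul_self (v : Fin 3 → ℝ) :
    Fintype.linearCombination ℝ pauli v * Fintype.linearCombination ℝ pauli v =
      algebraMap ℝ _ (Q3 v) := by
  have hv : Fintype.linearCombination ℝ pauli v =
      !![(v 2 : ℂ), v 0 - v 1 * Complex.I; v 0 + v 1 * Complex.I, -v 2] := by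
    ext i j
    fin_cases i <;> fin_cases j <;>
      simp [Fintype.linearCombination_apply, Fin.sum_univ_three, pauli, Complex.ext_iff]
  rw [hv, Matrix.mul_fin_two, Matrix.algebraMap_eq_diagonal]
  ext i j
  fin_cases i <;> fin_cases j <;>
    simp [QuadraticMap.weightedSumSquares_apply, Fin.sum_univ_three] <;> ring_nf <;>
    simp [Complex.I_sq]

def pauliRep : Cl3 →ₐ[ℝ] Matrix (Fin 2) (Fin 2) ℂ :=
  CliffordAlgebra.lift Q3 ⟨Fintype.linearCombination ℝ pauli, pauli_linearCombination_mul_self⟩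

lemma pauliRep_e (l : Fin 3) : pauliRep (e l) = pauli l := by
  rw [pauliRep, e, CliffordAlgebra.lift_ι_apply]
  simp [Fintype.linearCombination_apply, Pi.single_apply]

def scalarPart : Cl3 →ₗ[ℝ] ℝ :=
  (1 / 2 : ℝ) • (Complex.reLm ∘ₗ Matrix.traceLinearMap (Fin 2) ℝ ℂ ∘ₗ pauliRep.toLinearMap)

lemma scalarPart_apply (x : Cl3) : scalarPart x = (pauliRep x).trace.re / 2 := by
  simp only [scalarPart, LinearMap.smul_apply, LinearMap.coe_comp, Function.comp_apply,
    AlgHom.coe_toLinearMap, Matrix.traceLinearMap_apply, Complex.reLm_coe, smul_eq_mul]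
  ring

lemma scalarPart_one : scalarPart 1 = 1 := by
  simp [scalarPart_apply]

lemma scalarPart_e (l : Fin 3) : scalarPart (e l) = 0 := by
  fin_cases l <;> simp [scalarPart_apply, pauliRep_e, pauli, Matrix.trace_fin_two]

lemma scalarPart_e_mul_e {i j : Fin 3} (h : i ≠ j) : scalarPart (e i * e j) = 0 := by
  fin_cases i <;> fin_cases j <;> first | exact absurd rfl h |
    simp [scalarPart_apply, pauliRep_e, pauli, Matrix.trace_fin_two]

lemma scalarPart_e_mul_e_mul_e : scalarPart (e 0 * (e 1 * e 2)) = 0 := by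
  simp [scalarPart_apply, pauliRep_e, pauli, Matrix.trace_fin_two]

/- The trace of `pauliRep ⊗ pauliRep` cannot replace this functional: there the central
element `X 0 * (X 1 * X 2)` acts as `-1`. -/
def scalarPartTensor : A3 →ₗ[ℝ] ℝ :=
  TensorProduct.lift ((LinearMap.mul ℝ ℝ).compl₁₂ scalarPart scalarPart)

lemma scalarPartTensor_tmul (x y : Cl3) :
    scalarPartTensor (x ⊗ₜ y) = scalarPart x * scalarPart y :=
  TensorProduct.lift.tmul _ _

lemma scalarPartTensor_one : scalarPartTensor 1 = 1 := by
  rw [Algebra.TensorProduct.one_def, scalarPartTensor_tmul, scalarPart_one, mul_one]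

lemma scalarPartTensor_X (l : Fin 3) : scalarPartTensor (X l) = 0 := by
  rw [X, scalarPartTensor_tmul, scalarPart_e, mul_zero]

lemma scalarPartTensor_X_mul_X {i j : Fin 3} (h : i ≠ j) : scalarPartTensor (X i * X j) = 0 := by
  rw [X, X, Algebra.TensorProduct.tmul_mul_tmul, scalarPartTensor_tmul, scalarPart_e_mul_e h,
    mul_zero]

lemma scalarPartTensor_X_mul_X_mul_X : scalarPartTensor (X 0 * (X 1 * X 2)) = 0 := by
  rw [X, X, X, Algebra.TensorProduct.tmul_mul_tmul, Algebra.TensorProduct.tmul_mul_tmul,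
    scalarPartTensor_tmul, scalarPart_e_mul_e_mul_e, mul_zero]

lemma eq_zero_of_sum_smul_X_eq_smul_one {a₀ a₁ a₂ b₀₁ b₀₂ b₁₂ c : ℝ}
    (h : a₀ • X 0 + a₁ • X 1 + a₂ • X 2 + b₀₁ • (X 0 * X 1) + b₀₂ • (X 0 * X 2)
      + b₁₂ • (X 1 * X 2) = c • 1) :
    a₀ = 0 ∧ a₁ = 0 ∧ a₂ = 0 ∧ b₀₁ = 0 ∧ b₀₂ = 0 ∧ b₁₂ = 0 ∧ c = 0 := by
  have coeff (M : A3) := congrArg (fun U => scalarPartTensor (U * M)) h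
  have h01 : (0 : Fin 3) ≠ 1 := by decide
  have h02 : (0 : Fin 3) ≠ 2 := by decide
  have h12 : (1 : Fin 3) ≠ 2 := by decide
  have hc := coeff 1
  have ha₀ := coeff (X 0)
  have ha₁ := coeff (X 1)
  have ha₂ := coeff (X 2)
  have hb₀₁ := coeff (X 0 * X 1)
  have hb₀₂ := coeff (X 0 * X 2)
  have hb₁₂ := coeff (X 1 * X 2)
  simp only [add_mul, smul_mul_assoc, one_mul, mul_one, mul_assoc, X_mul_self, X_mul_self_mul,
    (X_commute 1 0).eq, (X_commute 2 0).eq, (X_commute 2 1).eq, (X_commute 1 0).left_comm,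
    (X_commute 2 0).left_comm, (X_commute 2 1).left_comm, map_add, map_smul, scalarPartTensor_one,
    scalarPartTensor_X, scalarPartTensor_X_mul_X h01, scalarPartTensor_X_mul_X h02,
    scalarPartTensor_X_mul_X h12, scalarPartTensor_X_mul_X_mul_X, smul_eq_mul, mul_zero,
    mul_one, add_zero, zero_add] at hc ha₀ ha₁ ha₂ hb₀₁ hb₀₂ hb₁₂
  exact ⟨ha₀, ha₁, ha₂, hb₀₁, hb₀₂, hb₁₂, hc.symm⟩

/-- `(K+1)(dr · Σ λ_A 𝒳_A)` is a real scalar multiple of `1` iff the five relations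
on the `λ_A` hold; and in that case it is equal to `0`. Here `dr := X₁ + X₂ + X₃`. -/
theorem stmt18 (lam : Fin 8 → ℝ) :
    ((∃ c : ℝ, K1 ((X 0 + X 1 + X 2) * ∑ A : Fin 8, lam A • XA A) = c • (1 : A3)) ↔
      (lam 3 = lam 2 ∧
       lam 4 = -(3 * lam 0 + lam 1) / 4 ∧
       lam 5 = -(lam 0 + 3 * lam 1) / 4 ∧
       lam 6 = (3/4) * (lam 0 - lam 1) - lam 2 ∧
       lam 7 = -(3/4) * (lam 0 - lam 1) - lam 2)) ∧
    ((lam 3 = lam 2 ∧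
      lam 4 = -(3 * lam 0 + lam 1) / 4 ∧
      lam 5 = -(lam 0 + 3 * lam 1) / 4 ∧
      lam 6 = (3/4) * (lam 0 - lam 1) - lam 2 ∧
      lam 7 = -(3/4) * (lam 0 - lam 1) - lam 2) →
      K1 ((X 0 + X 1 + X 2) * ∑ A : Fin 8, lam A • XA A) = 0) := by
  rw [K1_dr_mul_sum_XA]
  refine ⟨⟨?_, ?_⟩, ?_⟩
  · rintro ⟨c, hc⟩
    obtain ⟨h₀, -, h₂, h₀₁, h₀₂, h₁₂, -⟩ := eq_zero_of_sum_smul_X_eq_smul_one hc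
    refine ⟨?_, ?_, ?_, ?_, ?_⟩ <;> linarith
  · rintro ⟨h3, h4, h5, h6, h7⟩
    exact ⟨0, by rw [h3, h4, h5, h6, h7]; module⟩
  · rintro ⟨h3, h4, h5, h6, h7⟩
    rw [h3, h4, h5, h6, h7]
    module
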